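/- arXiv:math/0503608 — 2 statements merged into one kernel-verified Lean document; each statement's English description precedes it below -/
import Mathlib

section
/- Let g be a finite-dimensional Lie algebra over a field K of characteristic 0, and let r ∈ g⊗g. Define R : g* → g by R(ξ) = (id⊗ξ)(r), and suppose the bracket on g* given by [α,β] = ad*(R(β))(α) − ad*(R(α))(β) makes g* a Lie algebra acting on S(g*) by derivations extending the coadjoint-type action. Then the subalgebra S(g*)^g of g-invariants in the symmetric algebra S(g*) is closed under the Poisson bracket induced by the Lie bracket of g*, and this Poisson bracket vanishes on S(g*)^g; i.e., S(g*)^g is a Poisson-commutative subalgebra of S(g*). -/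
open TensorProduct

/-- let `g` be a finite-dimensional Lie algebra over a field `K` of
characteristic 0, `r ∈ g⊗g` (antisymmetric, `r ∈ Λ²g`), `R : g* → g` given by
`R(ξ) = (id⊗ξ)(r)`, and endow `g*` with the bracket
`[α,β] = ad*(R(β))(α) − ad*(R(α))(β)`.  Let `A` be (a model of) the symmetric
algebra `S(g*)`, generated by `g*`, with Poisson bracket `B` induced by the
bracket of `g*` (a biderivation restricting to the bracket on generators), and
let `g` act on `A` by derivations extending the coadjoint action.  Then the
Poisson bracket vanishes on the `g`-invariants: `S(g*)^g` is a
Poisson-commutative subalgebra of `S(g*)`. -/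
theorem invariants_Poisson_commute_in_Sgstar
    {K g A : Type*} [Field K] [CharZero K]
    [LieRing g] [LieAlgebra K g] [FiniteDimensional K g]
    [CommRing A] [Algebra K A]
    (r : g ⊗[K] g)
    -- r ∈ Λ²(g): antisymmetry
    (hr : (TensorProduct.comm K g g) r = - r)
    -- R : g* → g, R(ξ) = (id⊗ξ)(r)
    (Rmap : Module.Dual K g → g)
    (hRmap : ∀ ξ : Module.Dual K g,
      Rmap ξ = (TensorProduct.rid K g) ((TensorProduct.map LinearMap.id ξ) r))
    -- the coadjoint action ad* of g on g*
    (coad : g → Module.Dual K g →ₗ[K] Module.Dual K g)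
    (hcoad : ∀ (a : g) (ξ : Module.Dual K g),
      coad a ξ = - (ξ ∘ₗ (LieAlgebra.ad K g a : g →ₗ[K] g)))
    -- A is a model of S(g*): it is generated by the image of g*
    (ι : Module.Dual K g →ₗ[K] A)
    (hgen : Algebra.adjoin K (Set.range ι) = ⊤)
    -- the Poisson bracket B on A: an antisymmetric biderivation
    (B : A →ₗ[K] A →ₗ[K] A)
    (hBanti : ∀ f h : A, B f h = - B h f)
    (hBleib : ∀ f u v : A, B f (u * v) = B f u * v + u * B f v)
    -- on generators, B is the Lie bracket of g*:
    -- [α,β] = ad*(R(β))(α) − ad*(R(α))(β)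
    (hBgen : ∀ α β : Module.Dual K g,
      B (ι α) (ι β) = ι (coad (Rmap β) α - coad (Rmap α) β))
    -- the action of g on A by symmetric powers of the coadjoint action:
    -- derivations extending ad* on the generators
    (act : g →ₗ[K] Module.End K A)
    (hactder : ∀ (a : g) (u v : A), act a (u * v) = act a u * v + u * act a v)
    (hactlie : ∀ a b : g, act ⁅a, b⁆ = ⁅act a, act b⁆)
    (hactgen : ∀ (a : g) (ξ : Module.Dual K g), act a (ι ξ) = ι (coad a ξ)) :
    ∀ f h : A, (∀ a : g, act a f = 0) → (∀ a : g, act a h = 0) → B f h = 0 := by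
  classical
  -- basic consequences of the Leibniz rules
  have hB1 : ∀ f : A, B f 1 = 0 := by
    intro f
    have h1 := hBleib f 1 1
    rw [mul_one, mul_one, one_mul] at h1
    exact add_eq_left.mp h1.symm
  have hBalg : ∀ (f : A) (c : K), B f (algebraMap K A c) = 0 := by
    intro f c
    rw [Algebra.algebraMap_eq_smul_one, map_smul, hB1, smul_zero]
  have hBalg' : ∀ (f : A) (c : K), B (algebraMap K A c) f = 0 := by
    intro f c
    rw [hBanti, hBalg, neg_zero]
  have hBleib' : ∀ f u v : A, B (u * v) f = B u f * v + u * B v f := by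
    intro f u v
    rw [hBanti (u * v) f, hBleib, hBanti u f, hBanti v f]
    ring
  have hact1 : ∀ a : g, act a (1 : A) = 0 := by
    intro a
    have h1 := hactder a 1 1
    rw [mul_one, mul_one, one_mul] at h1
    exact add_eq_left.mp h1.symm
  have hactalg : ∀ (a : g) (c : K), act a (algebraMap K A c) = 0 := by
    intro a c
    rw [Algebra.algebraMap_eq_smul_one, map_smul, hact1, smul_zero]
  -- pointwise description of coad
  have hcoad' : ∀ (a x : g) (ξ : Module.Dual K g), coad a ξ x = - ξ ⁅a, x⁆ := by
    intro a x ξ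
    rw [hcoad]
    simp [LieAlgebra.ad_apply]
  -- decompose r as a finite sum of simple tensors
  obtain ⟨T, hT⟩ := TensorProduct.exists_finset r
  have hRsum : ∀ β : Module.Dual K g, Rmap β = ∑ p ∈ T, β p.2 • p.1 := by
    intro β
    rw [hRmap, hT, map_sum, map_sum]
    refine Finset.sum_congr rfl fun p _ => ?_
    rw [TensorProduct.map_tmul, LinearMap.id_apply, TensorProduct.rid_tmul]
  have hcoadsum : ∀ β α : Module.Dual K g,
      coad (Rmap β) α = ∑ p ∈ T, β p.2 • coad p.1 α := by
    intro β α
    have had : (LieAlgebra.ad K g) (Rmap β) = ∑ p ∈ T, β p.2 • (LieAlgebra.ad K g) p.1 := by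
      rw [hRsum β]
      rw [map_sum]
      exact Finset.sum_congr rfl fun p _ => map_smul _ _ _
    ext x
    simp only [hcoad, had, LinearMap.neg_apply, LinearMap.comp_apply, LinearMap.coe_sum,
      Finset.sum_apply, LinearMap.smul_apply, smul_eq_mul, map_sum, map_smul, mul_neg,
      ← Finset.sum_neg_distrib]
  -- the model: polynomial functions, with the projection π onto A
  set S := MvPolynomial (Module.Dual K g) K with hS
  let π : S →ₐ[K] A := MvPolynomial.aeval (fun ξ => ι ξ)
  have hπX : ∀ ξ : Module.Dual K g, π (MvPolynomial.X ξ) = ι ξ := fun ξ =>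
    MvPolynomial.aeval_X _ ξ
  have hπC : ∀ c : K, π (MvPolynomial.C c) = algebraMap K A c := fun c =>
    MvPolynomial.aeval_C _ c
  have hπsurj : Function.Surjective π := by
    intro f
    have hf : f ∈ Algebra.adjoin K (Set.range ι) := by rw [hgen]; trivial
    have hle : Algebra.adjoin K (Set.range ι) ≤ π.range :=
      Algebra.adjoin_le (by rintro _ ⟨ξ, rfl⟩; exact ⟨MvPolynomial.X ξ, hπX ξ⟩)
    exact hle hf
  -- the partial derivative derivations on S
  let D : g → Derivation K S S := fun b =>
    MvPolynomial.mkDerivation K (fun ξ : Module.Dual K g => MvPolynomial.C (ξ b))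
  have hDX : ∀ (b : g) (ξ : Module.Dual K g), D b (MvPolynomial.X ξ) = MvPolynomial.C (ξ b) :=
    fun b ξ => MvPolynomial.mkDerivation_X _ _ _
  have hDC : ∀ (b : g) (c : K), D b (MvPolynomial.C c) = 0 := by
    intro b c
    have hc : (MvPolynomial.C c : S) = algebraMap K S c := rfl
    rw [hc, Derivation.map_algebraMap]
  have hDmul : ∀ (b : g) (u v : S), D b (u * v) = u * D b v + v * D b u := by
    intro b u v
    rw [Derivation.leibniz]
    simp [smul_eq_mul]
  -- the lifted action derivations on S
  let ACT : g → Derivation K S S := fun a =>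
    MvPolynomial.mkDerivation K (fun ξ : Module.Dual K g => MvPolynomial.X (coad a ξ))
  have hACTX : ∀ (a : g) (ξ : Module.Dual K g),
      ACT a (MvPolynomial.X ξ) = MvPolynomial.X (coad a ξ) :=
    fun a ξ => MvPolynomial.mkDerivation_X _ _ _
  -- π intertwines ACT and act
  have hπACT : ∀ (a : g) (u : S), π (ACT a u) = act a (π u) := by
    intro a u
    induction u using MvPolynomial.induction_on with
    | C c =>
        have hc : (MvPolynomial.C c : S) = algebraMap K S c := rfl
        rw [hc, Derivation.map_algebraMap, map_zero, ← hc, hπC, hactalg]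
    | add p q hp hq => rw [map_add, map_add, map_add, map_add, hp, hq]
    | mul_X p ξ hp =>
        have he : ACT a (p * MvPolynomial.X ξ) =
            p * MvPolynomial.X (coad a ξ) + MvPolynomial.X ξ * ACT a p := by
          rw [Derivation.leibniz, hACTX]
          simp [smul_eq_mul]
        rw [he]
        simp only [map_add, map_mul, hπX, hp, hactder, hactgen]
        ring
  -- expansion of the bracket of two generators
  have hBgen' : ∀ α β : Module.Dual K g,
      B (ι α) (ι β) = ∑ p ∈ T, (β p.2 • ι (coad p.1 α) - α p.2 • ι (coad p.1 β)) := by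
    intro α β
    rw [hBgen, map_sub, hcoadsum, hcoadsum, map_sum, map_sum, ← Finset.sum_sub_distrib]
    refine Finset.sum_congr rfl fun p _ => ?_
    rw [map_smul, map_smul]
  -- base case of the main identity: first argument a generator
  have base : ∀ (α : Module.Dual K g) (v : S),
      B (ι α) (π v) =
        ∑ p ∈ T, (ι (coad p.1 α) * π (D p.2 v) - α p.2 • act p.1 (π v)) := by
    intro α v
    induction v using MvPolynomial.induction_on with
    | C c =>
        rw [hπC, hBalg]
        refine (Finset.sum_eq_zero fun p _ => ?_).symm
        rw [hDC, map_zero, mul_zero, hactalg, smul_zero, sub_zero]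
    | add u w hu hw =>
        rw [map_add, map_add, hu, hw, ← Finset.sum_add_distrib]
        refine Finset.sum_congr rfl fun p _ => ?_
        rw [map_add, map_add, map_add, mul_add, smul_add]
        ring
    | mul_X q ξ hq =>
        have hLHS : B (ι α) (π (q * MvPolynomial.X ξ)) =
            B (ι α) (π q) * ι ξ + π q * B (ι α) (ι ξ) := by
          rw [map_mul, hπX, hBleib]
        rw [hLHS, hq, hBgen', Finset.sum_mul, Finset.mul_sum, ← Finset.sum_add_distrib]
        refine Finset.sum_congr rfl fun p _ => ?_
        have hD : π (D p.2 (q * MvPolynomial.X ξ)) =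
            ξ p.2 • π q + ι ξ * π (D p.2 q) := by
          rw [hDmul, hDX]
          simp only [map_add, map_mul, hπX, hπC, Algebra.smul_def]
          ring
        have hA : act p.1 (π (q * MvPolynomial.X ξ)) =
            act p.1 (π q) * ι ξ + π q * ι (coad p.1 ξ) := by
          rw [map_mul, hπX, hactder, hactgen]
        rw [hD, hA]
        simp only [Algebra.smul_def]
        ring
  -- the main identity
  have main : ∀ u v : S, B (π u) (π v) =
      ∑ p ∈ T, (act p.1 (π u) * π (D p.2 v) - π (D p.2 u) * act p.1 (π v)) := by
    intro u v
    induction u using MvPolynomial.induction_on with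
    | C c =>
        rw [hπC, hBalg']
        refine (Finset.sum_eq_zero fun p _ => ?_).symm
        rw [hactalg, zero_mul, hDC, map_zero, zero_mul, sub_zero]
    | add u w hu hw =>
        simp only [map_add, LinearMap.add_apply]
        rw [hu, hw, ← Finset.sum_add_distrib]
        refine Finset.sum_congr rfl fun p _ => ?_
        ring
    | mul_X q ξ hq =>
        have hLHS : B (π (q * MvPolynomial.X ξ)) (π v) =
            B (π q) (π v) * ι ξ + π q * B (ι ξ) (π v) := by
          rw [map_mul, hπX, hBleib']
        rw [hLHS, hq, base ξ v, Finset.sum_mul, Finset.mul_sum, ← Finset.sum_add_distrib]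
        refine Finset.sum_congr rfl fun p _ => ?_
        have hD : π (D p.2 (q * MvPolynomial.X ξ)) =
            ξ p.2 • π q + ι ξ * π (D p.2 q) := by
          rw [hDmul, hDX]
          simp only [map_add, map_mul, hπX, hπC, Algebra.smul_def]
          ring
        have hA : act p.1 (π (q * MvPolynomial.X ξ)) =
            act p.1 (π q) * ι ξ + π q * ι (coad p.1 ξ) := by
          rw [map_mul, hπX, hactder, hactgen]
        rw [hD, hA]
        simp only [Algebra.smul_def]
        ring
  -- conclude
  intro f h hf hh
  obtain ⟨u, rfl⟩ := hπsurj f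
  obtain ⟨v, rfl⟩ := hπsurj h
  rw [main u v]
  refine Finset.sum_eq_zero fun p _ => ?_
  rw [hf p.1, hh p.1, zero_mul, mul_zero, sub_zero]
end

section
/- Let g* be a Lie bialgebra with cobracket δ : g* → Λ²g* and bracket μ : Λ²g* → g*, and let D = μ∘δ : g* → g*. Then D is both a derivation of the Lie bracket and a coderivation of the Lie cobracket of g*; i.e., D([x,y]) = [D(x),y] + [x,D(y)] and δ(D(x)) = (D⊗id + id⊗D)(δ(x)) for all x, y ∈ g*. -/
open TensorProduct

variable {K a : Type*} [Field K] [CharZero K] [LieRing a] [LieAlgebra K a]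

/-- The Lie bracket of `a` as a bilinear map `μ : a ⊗ a → a` (curried form). -/
noncomputable def brMap (K : Type*) (a : Type*) [Field K] [LieRing a]
    [LieAlgebra K a] : a →ₗ[K] a →ₗ[K] a :=
  LinearMap.mk₂ K (fun x y => ⁅x, y⁆) add_lie (fun c x y => smul_lie c x y)
    lie_add (fun c x y => lie_smul c x y)

/-- The diagonal adjoint action of `x` on `a ⊗ a`. -/
noncomputable def adDiag (K : Type*) {a : Type*} [Field K] [LieRing a]
    [LieAlgebra K a] (x : a) : a ⊗[K] a →ₗ[K] a ⊗[K] a :=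
  TensorProduct.map (brMap K a x) LinearMap.id
    + TensorProduct.map LinearMap.id (brMap K a x)

/-- The cyclic rotation `x⊗(y⊗z) ↦ y⊗(z⊗x)` on `a ⊗ (a ⊗ a)`. -/
noncomputable def cyc (K : Type*) (a : Type*) [Field K] [LieRing a]
    [LieAlgebra K a] : a ⊗[K] (a ⊗[K] a) →ₗ[K] a ⊗[K] (a ⊗[K] a) :=
  (TensorProduct.assoc K a a a).toLinearMap
    ∘ₗ (TensorProduct.comm K a (a ⊗[K] a)).toLinearMap

set_option linter.unusedSectionVars false

@[simp] lemma brMap_apply (x y : a) : brMap K a x y = ⁅x, y⁆ := rfl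

@[simp] lemma adDiag_tmul (x u v : a) :
    adDiag K x (u ⊗ₜ[K] v) = ⁅x, u⁆ ⊗ₜ[K] v + u ⊗ₜ[K] ⁅x, v⁆ := by
  simp [adDiag]

@[simp] lemma cyc_tmul (u v w : a) :
    cyc K a (u ⊗ₜ[K] (v ⊗ₜ[K] w)) = v ⊗ₜ[K] (w ⊗ₜ[K] u) := by
  simp [cyc]

/-- `A : u ⊗ (v ⊗ w) ↦ [u,v] ⊗ w` -/
noncomputable def Amap (K a : Type*) [Field K] [LieRing a] [LieAlgebra K a] :
    a ⊗[K] (a ⊗[K] a) →ₗ[K] a ⊗[K] a :=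
  (TensorProduct.map (TensorProduct.lift (brMap K a)) LinearMap.id) ∘ₗ
    (TensorProduct.assoc K a a a).symm.toLinearMap

/-- `B : u ⊗ (v ⊗ w) ↦ u ⊗ [v,w]` -/
noncomputable def Bmap (K a : Type*) [Field K] [LieRing a] [LieAlgebra K a] :
    a ⊗[K] (a ⊗[K] a) →ₗ[K] a ⊗[K] a :=
  TensorProduct.map LinearMap.id (TensorProduct.lift (brMap K a))

/-- `s : u ⊗ (v ⊗ w) ↦ v ⊗ (u ⊗ w)` -/
noncomputable def smap (K a : Type*) [Field K] [LieRing a] [LieAlgebra K a] :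
    a ⊗[K] (a ⊗[K] a) →ₗ[K] a ⊗[K] (a ⊗[K] a) :=
  (TensorProduct.assoc K a a a).toLinearMap ∘ₗ
    (TensorProduct.map (TensorProduct.comm K a a).toLinearMap LinearMap.id) ∘ₗ
    (TensorProduct.assoc K a a a).symm.toLinearMap

@[simp] lemma Amap_tmul (u v w : a) :
    Amap K a (u ⊗ₜ[K] (v ⊗ₜ[K] w)) = ⁅u, v⁆ ⊗ₜ[K] w := by
  simp [Amap]

@[simp] lemma Bmap_tmul (u v w : a) :
    Bmap K a (u ⊗ₜ[K] (v ⊗ₜ[K] w)) = u ⊗ₜ[K] ⁅v, w⁆ := by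
  simp [Bmap]

@[simp] lemma smap_tmul (u v w : a) :
    smap K a (u ⊗ₜ[K] (v ⊗ₜ[K] w)) = v ⊗ₜ[K] (u ⊗ₜ[K] w) := by
  simp [smap]

lemma lemA_s : Amap K a ∘ₗ smap K a = - Amap K a := by
  ext u v w
  simp only [TensorProduct.AlgebraTensorModule.curry_apply, TensorProduct.curry_apply,
    LinearMap.coe_restrictScalars, LinearMap.comp_apply, smap_tmul, Amap_tmul,
    LinearMap.neg_apply, ← neg_tmul, ← lie_skew u v, neg_neg]

lemma lemt_A : (TensorProduct.comm K a a).toLinearMap ∘ₗ Amap K a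
    = Bmap K a ∘ₗ cyc K a ∘ₗ cyc K a := by
  ext u v w
  simp

lemma lems_cc : smap K a ∘ₗ cyc K a ∘ₗ cyc K a = cyc K a ∘ₗ smap K a := by
  ext u v w
  simp

lemma lemc3 : cyc K a ∘ₗ cyc K a ∘ₗ cyc K a = LinearMap.id := by
  ext u v w
  simp

/-- `A + B∘s` applied to `u ⊗ τ` is `adDiag u τ`. -/
lemma ABs_tmul (u : a) (τ : a ⊗[K] a) :
    Amap K a (u ⊗ₜ[K] τ) + Bmap K a (smap K a (u ⊗ₜ[K] τ)) = adDiag K u τ := by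
  induction τ using TensorProduct.induction_on with
  | zero => simp
  | tmul v w => simp
  | add p q hp hq =>
      simp only [tmul_add, map_add]
      rw [← hp, ← hq]
      abel

/-- `c ∘ c ∘ assoc` is the big `comm`. -/
lemma cc_assoc (τ : a ⊗[K] a) (v : a) :
    cyc K a (cyc K a ((TensorProduct.assoc K a a a) (τ ⊗ₜ[K] v))) = v ⊗ₜ[K] τ := by
  induction τ using TensorProduct.induction_on with
  | zero => simp
  | tmul p q => simp
  | add p q hp hq => simp only [add_tmul, map_add, tmul_add, hp, hq]

/-- let `(g*, μ, δ)` be a Lie bialgebra (here stated for an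
arbitrary Lie bialgebra `a`, playing the role of `g*`) and `D = μ∘δ : a → a`.
Then `D` is a derivation of the Lie bracket and a coderivation of the Lie
cobracket: `D([x,y]) = [D(x),y] + [x,D(y)]` and
`δ(D(x)) = (D⊗id + id⊗D)(δ(x))`. -/
theorem canonical_derivation_is_derivation_and_coderivation
    (δ : a →ₗ[K] a ⊗[K] a)
    -- antisymmetry of the cobracket: δ(x) ∈ Λ²a
    (hanti : ∀ x : a, (TensorProduct.comm K a a) (δ x) = - δ x)
    -- 1-cocycle identity: δ([x,y]) = x·δ(y) − y·δ(x)
    (hcocycle : ∀ x y : a, δ ⁅x, y⁆ = adDiag K x (δ y) - adDiag K y (δ x))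
    -- co-Jacobi identity: the cyclic sum of (δ⊗id)∘δ vanishes
    (hcojac : ∀ x : a,
      ((TensorProduct.assoc K a a a) ((TensorProduct.map δ LinearMap.id) (δ x)))
        + cyc K a ((TensorProduct.assoc K a a a) ((TensorProduct.map δ LinearMap.id) (δ x)))
        + cyc K a (cyc K a
            ((TensorProduct.assoc K a a a) ((TensorProduct.map δ LinearMap.id) (δ x)))) = 0) :
    (∀ x y : a,
      (TensorProduct.lift (brMap K a) ∘ₗ δ) ⁅x, y⁆
        = ⁅(TensorProduct.lift (brMap K a) ∘ₗ δ) x, y⁆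
          + ⁅x, (TensorProduct.lift (brMap K a) ∘ₗ δ) y⁆)
    ∧ (∀ x : a,
      δ ((TensorProduct.lift (brMap K a) ∘ₗ δ) x)
        = TensorProduct.map (TensorProduct.lift (brMap K a) ∘ₗ δ) LinearMap.id (δ x)
          + TensorProduct.map LinearMap.id
              (TensorProduct.lift (brMap K a) ∘ₗ δ) (δ x)) := by
  set μ' : a ⊗[K] a →ₗ[K] a := TensorProduct.lift (brMap K a) with hμ'
  -- μ'(adDiag z τ) = ⁅z, μ' τ⁆
  have hμad : ∀ (z : a) (τ : a ⊗[K] a), μ' (adDiag K z τ) = ⁅z, μ' τ⁆ := by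
    intro z τ
    have h : μ' ∘ₗ adDiag K z = brMap K a z ∘ₗ μ' := by
      ext u v
      simp only [TensorProduct.AlgebraTensorModule.curry_apply, TensorProduct.curry_apply,
        LinearMap.coe_restrictScalars, LinearMap.comp_apply, adDiag_tmul, map_add, hμ',
        TensorProduct.lift.tmul, brMap_apply]
      exact (leibniz_lie z u v).symm
    have h2 := LinearMap.congr_fun h τ
    simpa only [LinearMap.comp_apply, brMap_apply] using h2
  constructor
  · intro x y
    simp only [LinearMap.comp_apply]
    rw [hcocycle, map_sub, hμad, hμad, ← lie_skew y (μ' (δ x)), sub_neg_eq_add, add_comm]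
  · intro x
    -- notation
    set c : a ⊗[K] (a ⊗[K] a) →ₗ[K] a ⊗[K] (a ⊗[K] a) := cyc K a with hc
    set S : a ⊗[K] (a ⊗[K] a) :=
      (TensorProduct.assoc K a a a) ((TensorProduct.map δ LinearMap.id) (δ x)) with hS
    -- inner antisymmetry: s S = -S
    have hsS : smap K a S = - S := by
      have h1 : ∀ τ : a ⊗[K] a, ∀ v : a,
          smap K a ((TensorProduct.assoc K a a a) (τ ⊗ₜ[K] v))
            = (TensorProduct.assoc K a a a)
                ((TensorProduct.comm K a a τ) ⊗ₜ[K] v) := by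
        intro τ v
        induction τ using TensorProduct.induction_on with
        | zero => simp
        | tmul p q => simp
        | add p q hp hq => simp only [add_tmul, map_add, hp, hq]
      have h2 : ∀ T : a ⊗[K] a,
          smap K a ((TensorProduct.assoc K a a a) ((TensorProduct.map δ LinearMap.id) T))
            = - (TensorProduct.assoc K a a a) ((TensorProduct.map δ LinearMap.id) T) := by
        intro T
        induction T using TensorProduct.induction_on with
        | zero => simp
        | tmul u v =>
            simp only [TensorProduct.map_tmul, LinearMap.id_apply, h1, hanti, neg_tmul, map_neg]
        | add p q hp hq => simp only [map_add, hp, hq, neg_add]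
      exact h2 (δ x)
    -- outer antisymmetry: (id ⊗ δ)(δ x) = - c (c S)
    have hccS : (TensorProduct.map LinearMap.id δ) (δ x) = - c (c S) := by
      have h1 : ∀ T : a ⊗[K] a,
          (TensorProduct.map LinearMap.id δ) ((TensorProduct.comm K a a) T)
            = c (c ((TensorProduct.assoc K a a a) ((TensorProduct.map δ LinearMap.id) T))) := by
        intro T
        induction T using TensorProduct.induction_on with
        | zero => simp
        | tmul u v => simp only [TensorProduct.comm_tmul, TensorProduct.map_tmul,
            LinearMap.id_apply, hc, cc_assoc]
        | add p q hp hq => simp only [map_add, hp, hq]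
      have h2 := h1 (δ x)
      rw [hanti, map_neg] at h2
      rw [hS, ← h2, neg_neg]
    -- co-Jacobi for S
    have hcoj : S + c S + c (c S) = 0 := hcojac x
    -- cocycle at the level of D
    have hDδ : δ (μ' (δ x))
        = - (Amap K a (c (c S)) + Bmap K a (smap K a (c (c S))))
          - (Amap K a (c (c S)) + Bmap K a (smap K a (c (c S)))) := by
      have hmap : δ ∘ₗ μ'
          = (Amap K a ∘ₗ TensorProduct.map LinearMap.id δ
              + Bmap K a ∘ₗ smap K a ∘ₗ TensorProduct.map LinearMap.id δ)
            - (Amap K a ∘ₗ TensorProduct.map LinearMap.id δ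
              + Bmap K a ∘ₗ smap K a ∘ₗ TensorProduct.map LinearMap.id δ)
                ∘ₗ (TensorProduct.comm K a a).toLinearMap := by
        ext u v
        simp only [TensorProduct.AlgebraTensorModule.curry_apply, TensorProduct.curry_apply,
          LinearMap.coe_restrictScalars, LinearMap.comp_apply, LinearMap.sub_apply,
          LinearMap.add_apply, TensorProduct.map_tmul, LinearMap.id_apply,
          LinearEquiv.coe_coe, TensorProduct.comm_tmul, ABs_tmul, hμ',
          TensorProduct.lift.tmul, brMap_apply]
        exact hcocycle u v
      have h := LinearMap.congr_fun hmap (δ x)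
      simp only [LinearMap.comp_apply, LinearMap.sub_apply, LinearMap.add_apply,
        LinearEquiv.coe_coe] at h
      rw [hanti, map_neg, map_neg, map_neg, hccS] at h
      rw [h]
      simp only [map_neg, neg_neg]
      abel
    -- key identities
    have e2 : smap K a (c (c S)) = - c S := by
      have h := LinearMap.congr_fun (lems_cc (K := K) (a := a)) S
      simp only [LinearMap.comp_apply] at h
      rw [h, hsS, map_neg]
    have hA_cS_ccS : Amap K a (c S) = Amap K a (c (c S)) := by
      have e1 := LinearMap.congr_fun (lemA_s (K := K) (a := a)) (c (c S))
      simp only [LinearMap.comp_apply, LinearMap.neg_apply] at e1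
      rw [e2, map_neg, neg_inj] at e1
      exact e1
    have hA_S : Amap K a S = - Amap K a (c (c S)) - Amap K a (c (c S)) := by
      have h := congrArg (Amap K a) hcoj
      simp only [map_add, map_zero] at h
      rw [hA_cS_ccS, add_assoc, add_eq_zero_iff_eq_neg] at h
      rw [h]
      abel
    have hB_cS : Bmap K a (c S) = (TensorProduct.comm K a a) (Amap K a (c (c S))) := by
      have h := LinearMap.congr_fun (lemt_A (K := K) (a := a)) (c (c S))
      simp only [LinearMap.comp_apply, LinearEquiv.coe_coe] at h
      have h3 : c (c (c (c S))) = c S := by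
        have h4 := LinearMap.congr_fun (lemc3 (K := K) (a := a)) (c S)
        simpa only [LinearMap.comp_apply, LinearMap.id_apply, hc] using h4
      rw [h3] at h
      exact h.symm
    have hB_ccS : Bmap K a (c (c S)) = (TensorProduct.comm K a a) (Amap K a S) := by
      have h := LinearMap.congr_fun (lemt_A (K := K) (a := a)) S
      simp only [LinearMap.comp_apply, LinearEquiv.coe_coe] at h
      exact h.symm
    -- the two right-hand terms
    have hR1 : TensorProduct.map (μ' ∘ₗ δ) LinearMap.id (δ x) = Amap K a S := by
      have hsplit : TensorProduct.map (μ' ∘ₗ δ) (LinearMap.id : a →ₗ[K] a)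
          = TensorProduct.map μ' LinearMap.id ∘ₗ TensorProduct.map δ LinearMap.id := by
        rw [← TensorProduct.map_comp, LinearMap.id_comp]
      rw [hsplit]
      simp only [LinearMap.comp_apply, hS, Amap, LinearEquiv.coe_coe,
        LinearEquiv.symm_apply_apply, hμ']
    have hR2 : TensorProduct.map LinearMap.id (μ' ∘ₗ δ) (δ x)
        = - Bmap K a (c (c S)) := by
      have hsplit : TensorProduct.map (LinearMap.id : a →ₗ[K] a) (μ' ∘ₗ δ)
          = Bmap K a ∘ₗ TensorProduct.map LinearMap.id δ := by
        rw [Bmap, ← TensorProduct.map_comp, LinearMap.id_comp]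
      rw [hsplit, LinearMap.comp_apply, hccS, map_neg]
    -- assemble
    rw [LinearMap.comp_apply, hDδ, hR1, hR2, e2, map_neg, hB_cS, hB_ccS, hA_S, map_sub,
      map_neg]
    abel
end
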